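/- Let f : ℝ² → ℝ² be a homeomorphism and let U : ℝ² × ℝ² → ℝ be continuous with U(x,y) ≥ 0 for all x,y, U(x,y) = 0 if and only if x = y, and second difference W(x,y) = U(f²(x),f²(y)) − 2·U(f(x),f(y)) + U(x,y) strictly positive whenever x ≠ y. Then f is U-expansive: for any two distinct points x, y ∈ ℝ² and any k > 0 there exists n ∈ ℤ such that U(fⁿ(x), fⁿ(y)) > k. -/

import Mathlib

/-! Along the orbit of a pair `x ≠ y`, the sequence `n ↦ U(fⁿx, fⁿy)` on `ℤ` has positive second
differences, so its first differences are strictly increasing. They are then positive from some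
index on or negative up to some index, and the sequence grows at least linearly forwards or
backwards in time. -/

section ConvexSequence

variable {α : Type*} [AddCommGroup α] [LinearOrder α] [IsOrderedAddMonoid α]

theorem add_nsmul_le_of_monotone_sub {a : ℤ → α} (ha : Monotone fun n => a (n + 1) - a n)
    (N : ℕ) : a 0 + N • (a 1 - a 0) ≤ a N := by
  induction N with
  | zero => simp
  | succ N ih =>
    have hslope : a 1 - a 0 ≤ a (N + 1) - a N := ha (Int.natCast_nonneg N)
    calc a 0 + (N + 1) • (a 1 - a 0) = (a 0 + N • (a 1 - a 0)) + (a 1 - a 0) := by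
          rw [succ_nsmul, add_assoc]
      _ ≤ a N + (a (N + 1) - a N) := add_le_add ih hslope
      _ = a ↑(N + 1) := by push_cast; abel

theorem exists_nat_lt_of_monotone_sub [Archimedean α] {a : ℤ → α}
    (ha : Monotone fun n => a (n + 1) - a n) (hpos : 0 < a 1 - a 0) (k : α) :
    ∃ N : ℕ, k < a N := by
  obtain ⟨N, hN⟩ := exists_lt_nsmul hpos (k - a 0)
  refine ⟨N, lt_of_lt_of_le ?_ (add_nsmul_le_of_monotone_sub ha N)⟩
  rwa [← sub_lt_iff_lt_add']

theorem exists_lt_of_strictMono_sub [Archimedean α] {a : ℤ → α}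
    (ha : StrictMono fun n => a (n + 1) - a n) (k : α) : ∃ n : ℤ, k < a n := by
  rcases lt_or_ge 0 (a 1 - a 0) with hpos | hnonpos
  · obtain ⟨N, hN⟩ := exists_nat_lt_of_monotone_sub ha.monotone hpos k
    exact ⟨N, hN⟩
  · -- Otherwise the reversed sequence `n ↦ a (-n)` has the same convexity and a positive slope at `0`.
    have hrev : Monotone fun n : ℤ => a (-(n + 1)) - a (-n) := fun m n hmn => by
      have := ha.monotone (show -(n + 1) ≤ -(m + 1) by omega)
      simp only [show ∀ j : ℤ, -(j + 1) + 1 = -j by intro j; ring] at this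
      show a (-(m + 1)) - a (-m) ≤ a (-(n + 1)) - a (-n)
      rw [← neg_sub (a (-m)), ← neg_sub (a (-n))]
      exact neg_le_neg this
    have hslope : 0 < a (-1) - a 0 := by
      have := ha (show (-1 : ℤ) < 0 by norm_num)
      simp only [neg_add_cancel, zero_add] at this
      rw [← neg_sub]
      exact neg_pos.mpr (this.trans_le hnonpos)
    obtain ⟨N, hN⟩ := exists_nat_lt_of_monotone_sub (a := fun n => a (-n)) hrev
      (by simpa using hslope) k
    exact ⟨-N, hN⟩

end ConvexSequence

theorem strictMono_orbit_sub {X : Type*} (f : Equiv.Perm X) (U : X → X → ℝ)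
    (hW : ∀ x y, x ≠ y → 0 < U (f (f x)) (f (f y)) - 2 * U (f x) (f y) + U x y)
    {x y : X} (hxy : x ≠ y) :
    StrictMono fun n : ℤ => U ((f ^ (n + 1)) x) ((f ^ (n + 1)) y) - U ((f ^ n) x) ((f ^ n) y) := by
  refine strictMono_int_of_lt_succ fun n => ?_
  have h := hW _ _ ((f ^ n).injective.ne hxy)
  simp only [add_comm _ (1 : ℤ), zpow_one_add, Equiv.Perm.mul_apply]
  linarith

theorem U_expansive_of_positive_second_difference
    (f : Equiv.Perm (ℝ × ℝ))
    (U : ℝ × ℝ → ℝ × ℝ → ℝ)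
    (hW : ∀ x y : ℝ × ℝ, x ≠ y →
      0 < U (f (f x)) (f (f y)) - 2 * U (f x) (f y) + U x y) :
    ∀ x y : ℝ × ℝ, x ≠ y → ∀ k > (0:ℝ),
      ∃ n : ℤ, k < U ((f ^ n) x) ((f ^ n) y) := fun _ _ hxy k _ =>
  exists_lt_of_strictMono_sub (strictMono_orbit_sub f U hW hxy) k
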